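/- arXiv:2603.01478 — 2 statements merged into one kernel-verified Lean document; each statement's English description precedes it below -/
import Mathlib

section
/- With rewards R_k* defined by the iterative formula and 0 < θ_1 ≤ ... ≤ θ_K, 0 ≤ Q_1 ≤ ... ≤ Q_K, the contract {(Q_k, R_k*)} satisfies all individual rationality constraints: υθ_k R_k* − aQ_k ≥ 0 for every k. -/
/-- The contract given by the iterative optimal rewards satisfies all individual
rationality constraints. -/
theorem iterative_rewards_ir (υ a : ℝ) (hυ : 0 < υ) (ha : 0 < a)
    (θ Q Rstar : ℕ → ℝ)
    (hθpos : 0 < θ 0) (hθmono : Monotone θ)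
    (hQ0 : 0 ≤ Q 0) (hQmono : Monotone Q)
    (hR : ∀ k, Rstar k =
      (a / υ) * (Q 0 / θ 0) +
        (a / υ) * ∑ i ∈ Finset.range k, (Q (i + 1) - Q i) / θ (i + 1)) :
    ∀ k : ℕ, υ * θ k * Rstar k - a * Q k ≥ 0 := by
  have hθ : ∀ k, 0 < θ k := fun k => lt_of_lt_of_le hθpos (hθmono (Nat.zero_le k))
  have hRnn : ∀ k, 0 ≤ Rstar k := by
    intro k
    rw [hR k]
    have h1 : 0 ≤ (a / υ) * (Q 0 / θ 0) := by positivity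
    have h2 : 0 ≤ ∑ i ∈ Finset.range k, (Q (i + 1) - Q i) / θ (i + 1) := by
      apply Finset.sum_nonneg
      intro i _
      have := hQmono (Nat.le_succ i)
      have h := hθ (i + 1)
      exact div_nonneg (by linarith) h.le
    have h3 : 0 ≤ (a / υ) := by positivity
    nlinarith
  intro k
  induction k with
  | zero =>
      rw [hR 0]
      simp only [Finset.range_zero, Finset.sum_empty, mul_zero, add_zero]
      have : υ * θ 0 * (a / υ * (Q 0 / θ 0)) = a * Q 0 := by
        field_simp
      linarith
  | succ n ih =>
      have hstep : Rstar (n + 1) = Rstar n + (a / υ) * ((Q (n + 1) - Q n) / θ (n + 1)) := by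
        rw [hR, hR, Finset.sum_range_succ]; ring
      have h1 : υ * θ (n + 1) * ((a / υ) * ((Q (n + 1) - Q n) / θ (n + 1)))
          = a * (Q (n + 1) - Q n) := by
        have h := (hθ (n + 1)).ne'
        have h' := hυ.ne'
        field_simp
      have hθle : θ n ≤ θ (n + 1) := hθmono (Nat.le_succ n)
      have hRn := hRnn n
      rw [hstep, mul_add, h1]
      have h2 : υ * θ n * Rstar n ≤ υ * θ (n + 1) * Rstar n :=
        mul_le_mul_of_nonneg_right (mul_le_mul_of_nonneg_left hθle hυ.le) hRn
      linarith
end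

section
/- With rewards R_k* defined by the iterative formula, for 0 < θ_1 ≤ ... ≤ θ_K and 0 ≤ Q_1 ≤ ... ≤ Q_K, all downward incentive compatibility constraints hold: for every k > n, υθ_k R_k* − aQ_k ≥ υθ_k R_n* − aQ_n. -/
/-- The contract given by the iterative optimal rewards satisfies all downward
incentive compatibility constraints. -/
theorem iterative_rewards_downward_ic (υ a : ℝ) (hυ : 0 < υ) (ha : 0 < a)
    (θ Q Rstar : ℕ → ℝ)
    (hθpos : 0 < θ 0) (hθmono : Monotone θ)
    (hQ0 : 0 ≤ Q 0) (hQmono : Monotone Q)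
    (hR : ∀ k, Rstar k =
      (a / υ) * (Q 0 / θ 0) +
        (a / υ) * ∑ i ∈ Finset.range k, (Q (i + 1) - Q i) / θ (i + 1)) :
    ∀ k n : ℕ, n < k →
      υ * θ k * Rstar k - a * Q k ≥ υ * θ k * Rstar n - a * Q n := by
  intro k n hnk
  have hθ : ∀ i, 0 < θ i := fun i => lt_of_lt_of_le hθpos (hθmono (Nat.zero_le i))
  set f : ℕ → ℝ := fun i => (Q (i + 1) - Q i) / θ (i + 1) with hf
  have key : ∀ i ∈ Finset.Ico n k, Q (i + 1) - Q i ≤ θ k * f i := by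
    intro i hi
    rw [Finset.mem_Ico] at hi
    have hθle : θ (i + 1) ≤ θ k := hθmono hi.2
    have hd : 0 ≤ Q (i + 1) - Q i := sub_nonneg.2 (hQmono (Nat.le_succ i))
    have hfnn : 0 ≤ f i := div_nonneg hd (hθ (i + 1)).le
    calc Q (i + 1) - Q i = θ (i + 1) * f i :=
          (mul_div_cancel₀ _ (hθ (i + 1)).ne').symm
      _ ≤ θ k * f i := mul_le_mul_of_nonneg_right hθle hfnn
  have hsum : ∑ i ∈ Finset.Ico n k, (Q (i + 1) - Q i) ≤
      θ k * ∑ i ∈ Finset.Ico n k, f i := by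
    rw [Finset.mul_sum]; exact Finset.sum_le_sum key
  have htel : ∑ i ∈ Finset.Ico n k, (Q (i + 1) - Q i) = Q k - Q n := by
    rw [Finset.sum_Ico_eq_sub _ hnk.le, Finset.sum_range_sub, Finset.sum_range_sub]
    ring
  have hIco : ∑ i ∈ Finset.Ico n k, f i =
      ∑ i ∈ Finset.range k, f i - ∑ i ∈ Finset.range n, f i :=
    Finset.sum_Ico_eq_sub _ hnk.le
  have hav : υ * (a / υ) = a := mul_div_cancel₀ a (ne_of_gt hυ)
  rw [hR k, hR n]
  have h2 : a * (Q k - Q n) ≤ a * (θ k * (∑ i ∈ Finset.range k, f i -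
      ∑ i ∈ Finset.range n, f i)) := by
    apply mul_le_mul_of_nonneg_left _ ha.le
    rw [← hIco, ← htel]; exact hsum
  have h3 : υ * θ k * (a / υ * ∑ i ∈ Finset.range k, f i) -
      υ * θ k * (a / υ * ∑ i ∈ Finset.range n, f i) =
      a * (θ k * (∑ i ∈ Finset.range k, f i - ∑ i ∈ Finset.range n, f i)) := by
    field_simp
  linarith [h2, h3]
end
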